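/- arXiv:math/0611576 — 2 statements merged into one kernel-verified Lean document; each statement's English description precedes it below -/
import Mathlib

section
/- Let w be a finite word over an alphabet A and let x ∈ A be a letter occurring in w; write w = w₁·x·w₂ where w₂ contains no occurrence of x. Then Pal(w₁) is a prefix of Pal(w), and writing Pal(w) = Pal(w₁)·u for the unique word u, one has Pal(w·x) = Pal(w)·u (that is, Pal(w·x) = Pal(w)·Pal(w₁)⁻¹·Pal(w)). -/
/-- The palindromic right closure `w⁽⁺⁾`: the shortest palindrome having `w` as a prefix. -/
def palClosure {A : Type*} [DecidableEq A] (w : List A) : List A :=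
  w ++ (w.take (Nat.find (⟨w.length, by simp⟩ :
    ∃ i, (w.drop i).reverse = w.drop i))).reverse

/-- Iterated palindromic closure: `Pal ε = ε`, `Pal (w·x) = (Pal w · x)⁽⁺⁾`. -/
def Pal {A : Type*} [DecidableEq A] (w : List A) : List A :=
  w.foldl (fun p x => palClosure (p ++ [x])) []

/-- `u` is a factor of the infinite word `s`. -/
def IsFactorOf {A : Type*} (u : List A) (s : ℕ → A) : Prop :=
  ∃ i : ℕ, u = (List.range u.length).map (fun j => s (i + j))

/-- `s` is balanced. -/
def IsBalanced {A : Type*} [DecidableEq A] (s : ℕ → A) : Prop :=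
  ∀ u v : List A, IsFactorOf u s → IsFactorOf v s → u.length = v.length →
    ∀ a : A, u.count a ≤ v.count a + 1

/-- `u` is a prefix of the infinite word `s`. -/
def IsPrefixOf {A : Type*} (u : List A) (s : ℕ → A) : Prop :=
  u = (List.range u.length).map s

/-- `s` is a standard episturmian sequence with directive sequence `Δ`. -/
def IsStdEpisturmian {A : Type*} [DecidableEq A] (s Δ : ℕ → A) : Prop :=
  ∀ n : ℕ, IsPrefixOf (Pal ((List.range n).map Δ)) s

/-- Concatenation of a finite word and an infinite word. -/
def wcat {A : Type*} (u : List A) (s : ℕ → A) : ℕ → A :=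
  fun n => if h : n < u.length then u.get ⟨n, h⟩ else s (n - u.length)

/-- The constant infinite word `c^ω`. -/
def constW {A : Type*} (c : A) : ℕ → A := fun _ => c

/-- The purely periodic infinite word `w^ω` (`d` is a default letter, irrelevant
when `w` is nonempty). -/
def perW {A : Type*} (w : List A) (d : A) : ℕ → A :=
  fun n => w.getD (n % w.length) d

/-- At least three distinct letters occur in `s`. -/
def ThreeLetters {A : Type*} (s : ℕ → A) : Prop :=
  ∃ a b c : A, a ≠ b ∧ a ≠ c ∧ b ≠ c ∧
    a ∈ Set.range s ∧ b ∈ Set.range s ∧ c ∈ Set.range s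

section Aux
variable {A : Type*} [DecidableEq A]

/-- The index of the longest palindromic suffix. -/
def psIdx (w : List A) : ℕ :=
  Nat.find (⟨w.length, by simp⟩ : ∃ i, (w.drop i).reverse = w.drop i)

lemma palClosure_eq (w : List A) : palClosure w = w ++ (w.take (psIdx w)).reverse := rfl

lemma psIdx_spec (w : List A) : (w.drop (psIdx w)).reverse = w.drop (psIdx w) :=
  Nat.find_spec (⟨w.length, by simp⟩ : ∃ i, (w.drop i).reverse = w.drop i)

lemma psIdx_le_length (w : List A) : psIdx w ≤ w.length :=
  Nat.find_min' _ (by simp)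

lemma psIdx_le {w : List A} {j : ℕ} (h : (w.drop j).reverse = w.drop j) : psIdx w ≤ j :=
  Nat.find_min' _ h

lemma psIdx_le_of_palin {u t : List A} (h : (u ++ t).reverse = u ++ t) :
    psIdx u ≤ t.length := by
  rcases le_or_gt t.length u.length with hle | hlt
  · have h1 : u.reverse = u.drop t.length ++ t := by
      have h' := congrArg (List.drop t.length) h.symm
      rw [List.reverse_append, List.drop_append,
        List.drop_left' (by simp)] at h'
      simpa [Nat.sub_eq_zero_of_le hle] using h'.symm
    have h2 : (u.drop t.length).reverse = u.drop t.length := by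
      have h3 := congrArg (List.take (u.length - t.length)) h1
      rw [List.take_left' (by rw [List.length_drop])] at h3
      exact List.reverse_drop.trans h3
    exact psIdx_le h2
  · exact (psIdx_le_length u).trans hlt.le

lemma palClosure_palindrome (w : List A) : (palClosure w).reverse = palClosure w := by
  rw [palClosure_eq, List.reverse_append, List.reverse_reverse]
  have h : w.reverse = w.drop (psIdx w) ++ (w.take (psIdx w)).reverse := by
    conv_lhs => rw [← List.take_append_drop (psIdx w) w]
    rw [List.reverse_append, psIdx_spec]
  rw [h, ← List.append_assoc, List.take_append_drop]

lemma palClosure_length (w : List A) : (palClosure w).length = w.length + psIdx w := by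
  simp [palClosure_eq, Nat.min_eq_left (psIdx_le_length w)]

lemma Pal_concat (w : List A) (x : A) : Pal (w ++ [x]) = palClosure (Pal w ++ [x]) := by
  simp [Pal, List.foldl_append]

lemma prefix_palClosure (w : List A) : w <+: palClosure w := ⟨_, rfl⟩

lemma Pal_mono {v w : List A} (h : v <+: w) : Pal v <+: Pal w := by
  induction w using List.reverseRecOn with
  | nil => simp_all
  | append_singleton w y ih =>
    rcases List.prefix_concat_iff.mp h with rfl | h'
    · exact List.prefix_refl _
    · exact (ih h').trans ((List.prefix_append _ _).trans
        (by rw [Pal_concat]; exact prefix_palClosure _))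

lemma Pal_palindrome (w : List A) : (Pal w).reverse = Pal w := by
  induction w using List.reverseRecOn with
  | nil => rfl
  | append_singleton w y ih => rw [Pal_concat]; exact palClosure_palindrome _

lemma palin_prefix_Pal {w p : List A} (hp : p.reverse = p) (hpre : p <+: Pal w) :
    ∃ v, v <+: w ∧ p = Pal v := by
  induction w using List.reverseRecOn with
  | nil =>
    refine ⟨[], List.prefix_refl _, ?_⟩
    simpa [Pal] using hpre
  | append_singleton w y ih =>
    rcases le_or_gt p.length (Pal w).length with hle | hlt
    · have hp' : p <+: Pal w := by
        refine List.prefix_of_prefix_length_le hpre ?_ hle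
        exact (List.prefix_append _ _).trans (by rw [Pal_concat]; exact prefix_palClosure _)
      obtain ⟨v, hv, rfl⟩ := ih hp'
      exact ⟨v, hv.trans (List.prefix_append _ _), rfl⟩
    · have h1 : Pal w ++ [y] <+: p := by
        refine List.prefix_of_prefix_length_le ?_ hpre (by simpa using hlt)
        rw [Pal_concat]; exact prefix_palClosure _
      obtain ⟨t, ht⟩ := h1
      have hM : psIdx (Pal w ++ [y]) ≤ t.length := psIdx_le_of_palin (by rw [ht]; exact hp)
      have hlen : (Pal (w ++ [y])).length ≤ p.length := by
        rw [Pal_concat, palClosure_length, ← ht]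
        simp; omega
      exact ⟨w ++ [y], List.prefix_refl _, hpre.eq_of_length_le hlen⟩

lemma Pal_concat_prefix {v w : List A} {y : A} (h : v ++ [y] <+: w) :
    Pal v ++ [y] <+: Pal w :=
  (show Pal v ++ [y] <+: Pal (v ++ [y]) by rw [Pal_concat]; exact prefix_palClosure _).trans
    (Pal_mono h)

lemma concat_prefix_of_Pal {v w : List A} {x : A} (hv : v <+: w)
    (h : Pal v ++ [x] <+: Pal w) : v ++ [x] <+: w := by
  have hne : v ≠ w := by
    rintro rfl
    have := h.length_le
    simp at this
  obtain ⟨r, hr⟩ := hv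
  have hrne : r ≠ [] := by rintro rfl; simp at hr; exact hne hr
  have h2 : v ++ [r.head hrne] <+: w :=
    ⟨r.tail, by rw [List.append_assoc, List.singleton_append, List.cons_head_tail, hr]⟩
  have h3 := Pal_concat_prefix h2
  have h4 : Pal v ++ [x] = Pal v ++ [r.head hrne] :=
    (List.prefix_of_prefix_length_le h h3 (by simp)).eq_of_length_le (by simp)
  have hx : x = r.head hrne := by simpa using h4
  rw [hx]
  exact h2

end Aux

/-- Lemma (Justin): if `w = w₁·x·w₂` with `w₂` `x`-free, then `Pal w₁` is a prefix of
`Pal w`, and writing `Pal w = Pal w₁ · u`, one has `Pal(w·x) = Pal(w)·u`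
(i.e. `Pal(w·x) = Pal(w)·Pal(w₁)⁻¹·Pal(w)`). -/
theorem pal_append_of_mem {A : Type*} [DecidableEq A] (w w₁ w₂ : List A) (x : A)
    (hw : w = w₁ ++ x :: w₂) (hx : x ∉ w₂) :
    Pal w₁ <+: Pal w ∧
      ∀ u : List A, Pal w = Pal w₁ ++ u → Pal (w ++ [x]) = Pal w ++ u := by
  subst hw
  have hw1 : w₁ ++ [x] <+: w₁ ++ x :: w₂ := ⟨w₂, by simp⟩
  have hpre : Pal w₁ <+: Pal (w₁ ++ x :: w₂) := Pal_mono (List.prefix_append _ _)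
  have hP1x : Pal w₁ ++ [x] <+: Pal (w₁ ++ x :: w₂) := Pal_concat_prefix hw1
  have hsuf : x :: Pal w₁ <:+ Pal (w₁ ++ x :: w₂) := by
    have h2 := List.reverse_suffix.mpr hP1x
    simpa [Pal_palindrome, List.reverse_append] using h2
  obtain ⟨Q, hQ⟩ := hsuf
  -- hQ : Q ++ x :: Pal w₁ = Pal (w₁ ++ x :: w₂)
  have hL : Q.length + ((Pal w₁).length + 1) = (Pal (w₁ ++ x :: w₂)).length := by
    have := congrArg List.length hQ
    simpa using this
  have hLle : (Pal w₁).length < (Pal (w₁ ++ x :: w₂)).length := by omega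
  -- the palindromic mirror form
  have hPr : Pal (w₁ ++ x :: w₂) = Pal w₁ ++ ([x] ++ Q.reverse) := by
    conv_lhs => rw [← Pal_palindrome (w := w₁ ++ x :: w₂), ← hQ]
    simp [List.reverse_append, Pal_palindrome]
  -- upper bound for psIdx
  have hub : psIdx (Pal (w₁ ++ x :: w₂) ++ [x]) ≤ Q.length := by
    apply psIdx_le
    have heq : Pal (w₁ ++ x :: w₂) ++ [x] = Q ++ ([x] ++ Pal w₁ ++ [x]) := by
      rw [← hQ]; simp
    rw [heq, List.drop_left' rfl]
    simp [List.reverse_append, Pal_palindrome]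
  -- lower bound
  have hlb : ¬ psIdx (Pal (w₁ ++ x :: w₂) ++ [x]) < Q.length := by
    intro hj
    set P := Pal (w₁ ++ x :: w₂) with hPdef
    set j := psIdx (P ++ [x]) with hjdef
    have hspec := psIdx_spec (P ++ [x])
    have hjP : j < P.length := by omega
    have hdrop : (P ++ [x]).drop j = P.drop j ++ [x] := by
      rw [List.drop_append, Nat.sub_eq_zero_of_le (by omega)]
      simp
    have htne : P.drop j ≠ [] := by
      apply List.ne_nil_of_length_pos
      rw [List.length_drop]; omega
    rw [← hjdef, hdrop] at hspec
    obtain ⟨hd, tl, hcons⟩ := List.exists_cons_of_ne_nil htne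
    rw [hcons] at hspec
    simp only [List.reverse_append, List.reverse_singleton, List.singleton_append,
      List.reverse_cons, List.cons_append] at hspec
    -- hspec : x :: (tl.reverse ++ [hd]) = hd :: (tl ++ [x])
    injection hspec with hhd htleq
    subst hhd
    have htlpal : tl.reverse = tl := List.append_cancel_right htleq
    have htl' : tl = P.drop (j + 1) := by
      rw [← List.tail_drop, hcons]
      rfl
    have hsfx : x :: tl <:+ P := hcons ▸ List.drop_suffix j P
    have hpfx : tl ++ [x] <+: P := by
      have h5 := List.reverse_prefix.mpr hsfx
      rw [hPdef, Pal_palindrome] at h5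
      rw [List.reverse_cons, htlpal] at h5
      exact h5
    obtain ⟨v, hvw, hveq⟩ := palin_prefix_Pal htlpal ((List.prefix_append tl [x]).trans hpfx)
    have hvx : v ++ [x] <+: w₁ ++ x :: w₂ := concat_prefix_of_Pal hvw (hveq ▸ hpfx)
    have htllen : (Pal w₁).length < tl.length := by
      rw [htl', List.length_drop]; omega
    -- v is strictly longer than w₁
    have hvlong : w₁.length < v.length := by
      by_contra hc
      push_neg at hc
      have : Pal v <+: Pal w₁ :=
        Pal_mono (List.prefix_of_prefix_length_le ((List.prefix_append v [x]).trans hvx)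
          (List.prefix_append _ _) hc)
      have := this.length_le
      rw [← hveq] at this
      omega
    have hw1v : w₁ <+: v := List.prefix_of_prefix_length_le (List.prefix_append _ _)
      ((List.prefix_append v [x]).trans hvx) hvlong.le
    obtain ⟨z, hz⟩ := hw1v
    have hzne : z ≠ [] := by
      rintro rfl
      rw [List.append_nil] at hz
      rw [← hz] at hvlong
      omega
    obtain ⟨zh, zt, rfl⟩ := List.exists_cons_of_ne_nil hzne
    rw [← hz] at hvx
    obtain ⟨c, hc⟩ := hvx
    simp only [List.append_assoc] at hc
    have hc' := List.append_cancel_left hc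
    -- hc' : (zh :: zt) ++ ([x] ++ c) = x :: w₂
    simp only [List.cons_append] at hc'
    injection hc' with _ hw2
    apply hx
    rw [← hw2]
    simp
  have hjQ : psIdx (Pal (w₁ ++ x :: w₂) ++ [x]) = Q.length := le_antisymm hub (by omega)
  refine ⟨hpre, fun u hu => ?_⟩
  have huval : u = [x] ++ Q.reverse := List.append_cancel_left (hu.symm.trans hPr)
  have htake : (Pal (w₁ ++ x :: w₂) ++ [x]).take Q.length = Q := by
    rw [← hQ, List.append_assoc, List.take_left]
  rw [Pal_concat, palClosure_eq, hjQ, htake, huval, List.append_assoc]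
end

section
/- Let s be a balanced standard episturmian sequence over an alphabet A such that at least 3 distinct letters occur in s, with directive sequence Δ = a·y·a·a·w, where a is a letter, y is a nonempty finite word whose letters are pairwise distinct and all different from a, and w is an infinite word. Then w = a^ω; that is, Δ = a·y·a^ω. -/
namespace Aux
variable {A : Type*} [DecidableEq A]

theorem palClosure_prefix (w : List A) : w <+: palClosure w := ⟨_, rfl⟩

theorem palClosure_reverse (w : List A) : (palClosure w).reverse = palClosure w := by
  unfold palClosure
  set k := Nat.find (⟨w.length, by simp⟩ : ∃ i, (w.drop i).reverse = w.drop i) with hk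
  have hspec : (w.drop k).reverse = w.drop k := by rw [hk]; exact Nat.find_spec (⟨w.length, by simp⟩ : ∃ i, (w.drop i).reverse = w.drop i)
  rw [List.reverse_append, List.reverse_reverse]
  have hw : w.reverse = w.drop k ++ (w.take k).reverse := by
    conv_lhs => rw [← List.take_append_drop k w]
    rw [List.reverse_append, hspec]
  rw [hw, ← List.append_assoc]
  congr 1
  conv_rhs => rw [← List.take_append_drop k w]

theorem mem_palClosure {x : A} {w : List A} (h : x ∈ palClosure w) : x ∈ w := by
  unfold palClosure at h
  rcases List.mem_append.1 h with h | h
  · exact h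
  · exact List.mem_of_mem_take (List.mem_reverse.1 h)

theorem palClosure_of_rev {w : List A} (h : w.reverse = w) : palClosure w = w := by
  unfold palClosure
  have h0 : Nat.find (⟨w.length, by simp⟩ : ∃ i, (w.drop i).reverse = w.drop i) = 0 := by
    rw [Nat.find_eq_zero]; simpa using h
  simp [h0]

theorem palClosure_fresh {x : A} {w : List A} (h : x ∉ w) :
    palClosure (w ++ [x]) = w ++ [x] ++ w.reverse := by
  unfold palClosure
  have hfind : Nat.find (⟨(w ++ [x]).length, by simp⟩ :
      ∃ i, ((w ++ [x]).drop i).reverse = (w ++ [x]).drop i) = w.length := by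
    rw [Nat.find_eq_iff]
    constructor
    · simp
    · intro i hi heq
      rw [List.drop_append_of_le_length (le_of_lt hi)] at heq
      have hne : w.drop i ≠ [] := by
        simp [List.drop_eq_nil_iff]; omega
      obtain ⟨hd, tl, hl⟩ := List.exists_cons_of_ne_nil hne
      have heq2 : x :: (w.drop i).reverse = w.drop i ++ [x] := by rw [← heq]; simp
      rw [hl] at heq2
      have hx : x = hd := by
        have := congrArg (fun t => t.head?) heq2
        simpa using this
      exact h (hx ▸ List.mem_of_mem_drop (hl ▸ (List.mem_cons_self : hd ∈ hd :: tl)))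
  rw [hfind, List.take_left]

theorem Pal_append_singleton (w : List A) (x : A) :
    Pal (w ++ [x]) = palClosure (Pal w ++ [x]) := by
  unfold Pal
  rw [List.foldl_append]
  rfl

theorem Pal_reverse (w : List A) : (Pal w).reverse = Pal w := by
  induction w using List.reverseRecOn with
  | nil => rfl
  | append_singleton w x ih => rw [Pal_append_singleton]; exact palClosure_reverse _

theorem Pal_prefix (u v : List A) : Pal u <+: Pal (u ++ v) := by
  induction v using List.reverseRecOn with
  | nil => simp
  | append_singleton v x ih =>
      rw [← List.append_assoc, Pal_append_singleton]
      exact ih.trans ((List.prefix_append _ [x]).trans (palClosure_prefix _))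

theorem mem_Pal {x : A} {w : List A} (h : x ∈ Pal w) : x ∈ w := by
  induction w using List.reverseRecOn with
  | nil => simpa [Pal] using h
  | append_singleton w y ih =>
      rw [Pal_append_singleton] at h
      rcases List.mem_append.1 (mem_palClosure h) with h | h
      · exact List.mem_append_left _ (ih h)
      · exact List.mem_append_right _ h

theorem Pal_length (w : List A) : w.length ≤ (Pal w).length := by
  induction w using List.reverseRecOn with
  | nil => simp
  | append_singleton w x ih =>
      rw [Pal_append_singleton]
      have h1 := (palClosure_prefix (Pal w ++ [x])).length_le
      simp only [List.length_append, List.length_singleton] at *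
      omega

theorem Pal_fresh {x : A} {w : List A} (h : x ∉ w) :
    Pal (w ++ [x]) = Pal w ++ [x] ++ Pal w := by
  rw [Pal_append_singleton, palClosure_fresh (fun hx => h (mem_Pal hx)), Pal_reverse]

theorem Pal_singleton (x : A) : Pal [x] = [x] := by
  have := Pal_fresh (w := ([] : List A)) (x := x) (by simp)
  simpa [Pal] using this

theorem palClosure_eq_of_find {w : List A} {k : ℕ}
    (hk : Nat.find (⟨w.length, by simp⟩ : ∃ i, (w.drop i).reverse = w.drop i) = k) :
    palClosure w = w ++ (w.take k).reverse := by
  unfold palClosure; rw [hk]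

theorem pal_take_next_ne (a : A) (y : List A) (hnd : y.Nodup) (hay : a ∉ y) :
    ∀ t, 0 < t → ∀ h2 : t < (Pal (a :: y)).length,
      ((Pal (a :: y)).take t).reverse = (Pal (a :: y)).take t → (Pal (a :: y))[t] ≠ a := by
  induction y using List.reverseRecOn with
  | nil =>
      intro t h1 h2 _
      rw [Pal_singleton] at h2
      simp at h2; omega
  | append_singleton y d ih =>
      intro t h1 h2 hpal
      have hd : d ∉ (a :: y) := by
        simp only [List.mem_cons]
        push_neg
        constructor
        · rintro rfl; exact hay (by simp)
        · intro hmem; exact (List.nodup_append.1 hnd).2.2 d hmem d (by simp) rfl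
      have hnd' : y.Nodup := (List.nodup_append.1 hnd).1
      have hay' : a ∉ y := fun h => hay (List.mem_append_left _ h)
      set S := Pal (a :: y) with hS
      have hW : Pal (a :: (y ++ [d])) = (S ++ [d]) ++ S := by
        rw [← List.cons_append]; exact Pal_fresh hd
      have hdS : d ∉ S := fun h => hd (mem_Pal h)
      have hSlen : 1 ≤ S.length := le_trans (by simp) (Pal_length (a :: y))
      simp only [hW] at h2 hpal ⊢
      simp only [List.length_append, List.length_singleton] at h2
      rcases lt_trichotomy t S.length with hts | hts | hts
      · have htake : ((S ++ [d]) ++ S).take t = S.take t := by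
          rw [List.take_append_of_le_length (by simp only [List.length_append, List.length_singleton]; omega),
              List.take_append_of_le_length (by omega)]
        have hget : ((S ++ [d]) ++ S)[t]'(by simp only [List.length_append, List.length_singleton]; omega) = S[t] := by
          rw [List.getElem_append_left (by simp only [List.length_append, List.length_singleton]; omega), List.getElem_append_left hts]
        rw [htake] at hpal
        simp only [hget]
        exact ih hnd' hay' t h1 hts hpal
      · subst hts
        have hget : ((S ++ [d]) ++ S)[S.length]'(by simp) = d := by
          rw [List.getElem_append_left (by simp)]
          rw [List.getElem_append_right (le_refl _)]
          simp
        simp only [hget]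
        intro hda
        exact hd (hda ▸ (List.mem_cons_self : a ∈ a :: y))
      · exfalso
        set V := ((S ++ [d]) ++ S).take t with hV
        have hVlen : V.length = t := by
          simp [hV]; omega
        have hVS : V[S.length]'(by omega) = d := by
          simp only [hV]
          rw [List.getElem_take, List.getElem_append_left (by simp only [List.length_append, List.length_singleton]; omega),
              List.getElem_append_right (le_refl _)]
          simp
        have hidx : t - 1 - S.length < S.length := by omega
        have hVd : V[t - 1 - S.length]'(by omega) = d := by
          have h3 : V.reverse[t - 1 - S.length]'(by rw [List.length_reverse]; omega) =
              V[S.length]'(by omega) := by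
            rw [List.getElem_reverse]
            congr 1
            omega
          simp only [hpal] at h3
          rw [h3, hVS]
        have hVd2 : V[t - 1 - S.length]'(by omega) = S[t - 1 - S.length] := by
          simp only [hV]
          rw [List.getElem_take, List.getElem_append_left (by simp only [List.length_append, List.length_singleton]; omega),
              List.getElem_append_left hidx]
        exact hdS (hVd ▸ hVd2 ▸ List.getElem_mem _)

theorem take_one_Pal (a : A) (y : List A) : (Pal (a :: y)).take 1 = [a] := by
  have h := Pal_prefix [a] y
  rw [Pal_singleton] at h
  rw [List.prefix_iff_eq_take] at h
  exact h.symm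

theorem Pal_aya (a : A) (y : List A) (hy : y ≠ []) (hnd : y.Nodup) (hay : a ∉ y) :
    Pal ((a :: y) ++ [a]) = Pal (a :: y) ++ Pal (a :: y) := by
  set P := Pal (a :: y) with hPdef
  have hP : P.reverse = P := Pal_reverse _
  have hlen : 2 ≤ P.length := by
    have h1 := Pal_length (a :: y)
    rw [← hPdef] at h1
    have h2 : 1 ≤ y.length := List.length_pos_iff.2 hy
    simp only [List.length_cons] at h1
    omega
  have htake1 : P.take 1 = [a] := take_one_Pal a y
  obtain ⟨tl, htl⟩ : ∃ tl, P = a :: tl := by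
    refine ⟨P.drop 1, ?_⟩
    conv_lhs => rw [← List.take_append_drop 1 P, htake1]
    rfl
  have hconcat : tl.reverse ++ [a] = P := by
    conv_rhs => rw [← hP, htl]
    simp
  set n := P.length with hn
  have hfind : Nat.find (⟨(P ++ [a]).length, by simp⟩ :
      ∃ i, ((P ++ [a]).drop i).reverse = (P ++ [a]).drop i) = n - 1 := by
    rw [Nat.find_eq_iff]
    constructor
    · have hdrop : (P ++ [a]).drop (n - 1) = [a, a] := by
        rw [List.drop_append_of_le_length (by omega)]
        have hPd : P.drop (n - 1) = [a] := by
          have hlt : tl.reverse.length = n - 1 := by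
            have h2 := congrArg List.length hconcat
            simp only [List.length_append, List.length_singleton,
              List.length_reverse] at h2
            simp only [List.length_reverse]
            omega
          rw [← hconcat, ← hlt, List.drop_left]
        rw [hPd]
        rfl
      rw [hdrop]
      rfl
    · intro i hi hpal
      set m := n - i with hm
      have hm2 : 2 ≤ m := by omega
      have hmn : m ≤ n := by omega
      set U := P.take m with hU
      have hUlen : U.length = m := by rw [hU, List.length_take]; omega
      have hdropU : P.drop i = U.reverse := by
        have h1 : (P.drop i).reverse = U := by
          rw [List.reverse_drop, hP, ← hn, hU]
        rw [← h1, List.reverse_reverse]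
      rw [List.drop_append_of_le_length (by omega), hdropU] at hpal
      have hEq : a :: U = U.reverse ++ [a] := by
        rw [← hpal]
        simp
      obtain ⟨M, hM⟩ : ∃ M, U.reverse = a :: M := by
        have hne : U.reverse ≠ [] := by
          simp only [ne_eq, List.reverse_eq_nil_iff]
          intro h
          rw [h] at hUlen
          simp at hUlen
          omega
        obtain ⟨hd, tl2, h⟩ := List.exists_cons_of_ne_nil hne
        refine ⟨tl2, ?_⟩
        rw [h] at hEq ⊢
        rw [List.cons_append] at hEq
        rw [(List.cons_eq_cons.1 hEq).1]
      have hUM : U = M ++ [a] := by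
        rw [hM, List.cons_append] at hEq
        exact (List.cons_eq_cons.1 hEq).2
      have hMrev : M.reverse = M := by
        have h1 : U.reverse = a :: M.reverse := by
          rw [hUM]; simp
        rw [hM] at h1
        exact ((List.cons_eq_cons.1 h1).2).symm
      have hMlen : M.length = m - 1 := by
        have h2 := congrArg List.length hUM
        rw [hUlen] at h2
        simp only [List.length_append, List.length_singleton] at h2
        omega
      have hMtake : M = P.take (m - 1) := by
        have h1 : U.dropLast = M := by rw [hUM]; exact List.dropLast_concat
        rw [← h1, hU, List.dropLast_eq_take, List.take_take, List.length_take]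
        congr 1
        omega
      have hPm1 : P[m - 1]'(by omega) = a := by
        have h1 : (P.take m)[m - 1]'(by rw [List.length_take]; omega) =
            P[m - 1]'(by omega) := List.getElem_take
        rw [← h1]
        have h2 : P.take m = M ++ [a] := by rw [← hU]; exact hUM
        simp only [h2]
        rw [List.getElem_append_right (by omega)]
        have h3 : m - 1 - M.length = 0 := by omega
        simp [h3]
      have := pal_take_next_ne a y hnd hay (m - 1) (by omega) (by rw [← hn]; omega)
        (by rw [← hPdef, ← hMtake]; exact hMrev)
      exact this hPm1
  rw [Pal_append_singleton, ← hPdef, palClosure_eq_of_find hfind]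
  rw [List.take_append_of_le_length (by omega)]
  rw [List.reverse_take, hP, ← hn]
  have h1 : n - (n - 1) = 1 := by omega
  rw [h1, List.append_assoc]
  congr 1
  rw [htl]
  rfl

theorem prefix_getElem {s : ℕ → A} {p : List A} (hp : IsPrefixOf p s)
    {k : ℕ} (hk : k < p.length) : p[k] = s k := by
  have h2 : p[k]'hk = ((List.range p.length).map s)[k]'(by
      rw [← hp]; exact hk) := by
    exact List.getElem_of_eq hp hk
  rw [h2]
  simp

theorem factor_of_prefix {s : ℕ → A} {p u : List A} (hp : IsPrefixOf p s)
    (hu : u <:+: p) : IsFactorOf u s := by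
  obtain ⟨l₁, l₂, hl⟩ := hu
  refine ⟨l₁.length, ?_⟩
  apply List.ext_getElem (by simp)
  intro j h1 h2
  have hjp : l₁.length + j < p.length := by
    rw [← hl]
    simp only [List.length_append]
    omega
  have e1 : p[l₁.length + j]'hjp = u[j]'h1 := by
    rw [List.getElem_of_eq hl.symm hjp]
    rw [List.getElem_append_left (by simp only [List.length_append]; omega)]
    rw [List.getElem_append_right (by omega)]
    congr 1
    omega
  rw [← e1, prefix_getElem hp]
  simp

theorem map_range_wcat_le {L : List A} {w : ℕ → A} {N : ℕ} (h : N ≤ L.length) :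
    (List.range N).map (wcat L w) = L.take N := by
  apply List.ext_getElem (by simp; omega)
  intro j h1 h2
  simp only [List.getElem_map, List.getElem_range, List.getElem_take]
  unfold wcat
  rw [dif_pos (by simp at h1; omega)]
  simp [List.get_eq_getElem]

theorem map_range_wcat_add (L : List A) (w : ℕ → A) (k : ℕ) :
    (List.range (L.length + k)).map (wcat L w) = L ++ (List.range k).map w := by
  apply List.ext_getElem (by simp)
  intro j h1 h2
  simp only [List.getElem_map, List.getElem_range]
  unfold wcat
  by_cases hj : j < L.length
  · rw [dif_pos hj, List.getElem_append_left hj]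
    simp [List.get_eq_getElem]
  · rw [dif_neg hj, List.getElem_append_right (by omega)]
    simp only [List.getElem_map, List.getElem_range]

theorem s_letter_mem {s Δ : ℕ → A} (hepi : IsStdEpisturmian s Δ) (i : ℕ) :
    ∃ m, Δ m = s i := by
  have hp := hepi (i + 1)
  have hlen : i < (Pal ((List.range (i + 1)).map Δ)).length := by
    have h1 := Pal_length ((List.range (i + 1)).map Δ)
    simp only [List.length_map, List.length_range] at h1
    omega
  have h2 : (Pal ((List.range (i + 1)).map Δ))[i] = s i := prefix_getElem hp hlen
  have h4 := mem_Pal (List.getElem_mem hlen)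
  simp only [List.mem_map, List.mem_range] at h4
  obtain ⟨m, _, hm⟩ := h4
  exact ⟨m, by rw [hm, h2]⟩

theorem eq_cons_of_take_one {p : List A} {x : A} (h : p.take 1 = [x]) :
    ∃ t, p = x :: t := by
  refine ⟨p.drop 1, ?_⟩
  conv_lhs => rw [← List.take_append_drop 1 p, h]
  rfl

theorem eq_concat_of_rev {p : List A} {x : A} (hrev : p.reverse = p) {t : List A}
    (h : p = x :: t) : p = t.reverse ++ [x] := by
  conv_lhs => rw [← hrev, h]
  simp

theorem Pal_pair {x c : A} (h : c ≠ x) : Pal [x, c] = [x, c, x] := by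
  have h1 : Pal ([x] ++ [c]) = Pal [x] ++ [c] ++ Pal [x] :=
    Pal_fresh (by simpa using h)
  rw [Pal_singleton] at h1
  exact h1

end Aux

open Aux in
/-- If `s` is a balanced standard episturmian sequence over at least 3 letters whose
directive sequence is `Δ = a·y·a·a·w` (with `y` nonempty, with pairwise distinct
letters all different from `a`), then `w = a^ω`, i.e. `Δ = a·y·a^ω`. -/
theorem double_a_forces_constant_tail {A : Type*} [DecidableEq A] (s Δ : ℕ → A)
    (a : A) (y : List A) (w : ℕ → A)
    (hbal : IsBalanced s) (hepi : IsStdEpisturmian s Δ) (h3 : ThreeLetters s)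
    (hy : y ≠ []) (hnd : y.Nodup) (hay : a ∉ y)
    (hΔ : Δ = wcat (a :: y ++ [a, a]) w) :
    w = constW a := by
  classical
  set L := (a :: y) ++ [a, a] with hLdef
  have hL : L.length = y.length + 3 := by simp [hLdef]
  have hΔ0 : Δ 0 = a := by rw [hΔ]; simp [wcat, hLdef]
  suffices key : ∀ n, w n = a by funext n; exact key n
  by_contra hcon
  push_neg at hcon
  set n₀ := Nat.find hcon with hn₀
  have hb : w n₀ ≠ a := Nat.find_spec hcon
  have hmin : ∀ i, i < n₀ → w i = a := fun i hi => by
    have := Nat.find_min hcon hi; simpa using this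
  set b := w n₀ with hbdef
  obtain ⟨c, y', hy'⟩ := List.exists_cons_of_ne_nil hy
  have hcy : c ∈ y := by rw [hy']; exact List.mem_cons_self
  have hca : c ≠ a := fun h => hay (h ▸ hcy)
  set P := Pal (a :: y) with hPdef
  have hPrev : P.reverse = P := Pal_reverse _
  have hac : [a, c, a] <+: P := by
    have h1 := Pal_prefix [a, c] y'
    rw [Pal_pair hca] at h1
    have h2 : [a, c] ++ y' = a :: y := by rw [hy']; rfl
    rw [h2] at h1
    exact h1
  have hrepl : (List.range n₀).map w = List.replicate n₀ a := by
    rw [List.eq_replicate_iff]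
    refine ⟨by simp, ?_⟩
    intro x hx
    simp only [List.mem_map, List.mem_range] at hx
    obtain ⟨i, hi, rfl⟩ := hx
    exact hmin i hi
  set v' := (a :: y) ++ List.replicate (n₀ + 2) a with hv'
  have hmapN : (List.range (L.length + (n₀ + 1))).map Δ = v' ++ [b] := by
    rw [hΔ, map_range_wcat_add]
    rw [List.range_succ, List.map_append, hrepl]
    rw [hLdef, hv']
    simp [List.replicate_succ, List.append_assoc, hbdef]
  set Q := Pal v' with hQdef
  have hQrev : Q.reverse = Q := Pal_reverse _
  have hPQ : P <+: Q := Pal_prefix _ _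
  have hNpref : IsPrefixOf (Pal (v' ++ [b])) s := by
    have h0 := hepi (L.length + (n₀ + 1))
    rw [hmapN] at h0
    exact h0
  by_cases hbmem : b ∈ y
  · -- CASE II : b occurs in y
    obtain ⟨y₁, y₂, hysplit⟩ := List.append_of_mem hbmem
    have hnd2 : (y₁ ++ b :: y₂).Nodup := hysplit ▸ hnd
    have hbny₁ : b ∉ y₁ := fun h => (List.nodup_append.1 hnd2).2.2 b h b List.mem_cons_self rfl
    have hbaR : b ∉ (a :: y₁) := by
      intro h
      rcases List.mem_cons.1 h with h | h
      · exact hb h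
      · exact hbny₁ h
    set R := Pal (a :: y₁) with hRdef
    have hRrev : R.reverse = R := Pal_reverse _
    have hRbR : Pal ((a :: y₁) ++ [b]) = R ++ [b] ++ R := Pal_fresh hbaR
    have hRbRP : R ++ [b] ++ R <+: P := by
      have h1 := Pal_prefix ((a :: y₁) ++ [b]) y₂
      rw [hRbR] at h1
      have h2 : ((a :: y₁) ++ [b]) ++ y₂ = a :: y := by rw [hysplit]; simp
      rw [h2] at h1
      exact h1
    have hRbQ : R ++ [b] <+: Q :=
      ((List.prefix_append _ _).trans hRbRP).trans hPQ
    have hZdef : Pal (v' ++ [b]) = palClosure (Q ++ [b]) := Pal_append_singleton _ _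
    have hbQsuf : (Q ++ [b]).reverse <:+ Pal (v' ++ [b]) := by
      rw [hZdef, ← palClosure_reverse (Q ++ [b])]
      exact (palClosure_prefix _).reverse
    have hbQrev : (Q ++ [b]).reverse = b :: Q := by simp [hQrev]
    set u := [b] ++ (R ++ [b]) with hu
    have hufac : IsFactorOf u s := by
      apply factor_of_prefix hNpref
      have h1 : u <+: b :: Q := by
        obtain ⟨t, ht⟩ := hRbQ
        exact ⟨t, by rw [hu, ← ht]; simp⟩
      rw [hbQrev] at hbQsuf
      exact h1.isInfix.trans hbQsuf.isInfix
    have hbR : b ∉ R := fun h => hbaR (mem_Pal h)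
    have hcu : u.count b = 2 := by
      simp [hu, List.count_append, List.count_eq_zero_of_not_mem hbR]
    cases y₁ with
    | nil =>
      have hRa : R = [a] := Pal_singleton a
      obtain ⟨x1, x2, x3, hx12, hx13, hx23, hr1, hr2, hr3⟩ := h3
      have he : ∃ e, e ∈ Set.range s ∧ e ≠ a ∧ e ≠ b := by
        by_cases e1 : x1 ≠ a ∧ x1 ≠ b
        · exact ⟨x1, hr1, e1⟩
        · by_cases e2 : x2 ≠ a ∧ x2 ≠ b
          · exact ⟨x2, hr2, e2⟩
          · rw [not_and_or, not_not, not_not] at e1 e2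
            refine ⟨x3, hr3, ?_, ?_⟩
            · rcases e1 with rfl | rfl <;> rcases e2 with rfl | rfl
              · exact absurd rfl hx12
              · exact fun h => hx13 h.symm
              · exact fun h => hx23 h.symm
              · exact absurd rfl hx12
            · rcases e1 with rfl | rfl <;> rcases e2 with rfl | rfl
              · exact absurd rfl hx12
              · exact fun h => hx23 h.symm
              · exact fun h => hx13 h.symm
              · exact absurd rfl hx12
      obtain ⟨e, ⟨i0, hei⟩, hea, heb⟩ := he
      have hexm : ∃ m, Δ m ≠ a ∧ Δ m ≠ b := by
        obtain ⟨m1, hm1⟩ := s_letter_mem hepi i0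
        exact ⟨m1, by rw [hm1, hei]; exact ⟨hea, heb⟩⟩
      set m₀ := Nat.find hexm with hm₀
      obtain ⟨hea0, heb0⟩ := Nat.find_spec hexm
      rw [← hm₀] at hea0 heb0
      have hminm : ∀ j, j < m₀ → Δ j = a ∨ Δ j = b := by
        intro j hj
        have h1 := Nat.find_min hexm hj
        by_contra hcc
        push_neg at hcc
        exact h1 ⟨hcc.1, hcc.2⟩
      have hm0pos : 0 < m₀ := by
        rcases Nat.eq_zero_or_pos m₀ with h0 | h0
        · exfalso; rw [h0] at hea0; exact hea0 hΔ0
        · exact h0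
      set z := (List.range m₀).map Δ with hz
      have hez : Δ m₀ ∉ z := by
        rw [hz]
        intro h
        simp only [List.mem_map, List.mem_range] at h
        obtain ⟨j, hj, hjq⟩ := h
        rcases hminm j hj with h | h
        · exact hea0 (by rw [← hjq, h])
        · exact heb0 (by rw [← hjq, h])
      have hPalze : Pal (z ++ [Δ m₀]) = Pal z ++ [Δ m₀] ++ Pal z := Pal_fresh hez
      have hzpref : IsPrefixOf (Pal (z ++ [Δ m₀])) s := by
        have h0 := hepi (m₀ + 1)
        have h1 : (List.range (m₀ + 1)).map Δ = z ++ [Δ m₀] := by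
          rw [List.range_succ, List.map_append]
          rfl
        rw [h1] at h0
        exact h0
      obtain ⟨k0, hk0⟩ : ∃ k, m₀ = k + 1 := ⟨m₀ - 1, by omega⟩
      have hztake : ∃ zt, z = a :: zt := by
        refine ⟨(List.range k0).map (fun j => Δ (j + 1)), ?_⟩
        rw [hz, hk0, List.range_succ_eq_map, List.map_cons, List.map_map, hΔ0]
        rfl
      obtain ⟨zt, hzt⟩ := hztake
      have hPz1 : (Pal z).take 1 = [a] := by rw [hzt]; exact take_one_Pal a zt
      obtain ⟨pt, hpt⟩ := eq_cons_of_take_one hPz1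
      have hpt2 : Pal z = pt.reverse ++ [a] := eq_concat_of_rev (Pal_reverse z) hpt
      set v := [a, Δ m₀, a] with hv
      have hvfac : IsFactorOf v s := by
        apply factor_of_prefix hzpref
        rw [hPalze]
        refine ⟨pt.reverse, pt, ?_⟩
        nth_rewrite 2 [hpt]
        nth_rewrite 1 [hpt2]
        simp [hv]
      have hcv : v.count b = 0 := by
        simp [hv, List.count_cons, Ne.symm hb, heb0]
      have hlenuv : u.length = v.length := by simp [hu, hv, hRa]
      have hfin := hbal u v hufac hvfac hlenuv b
      rw [hcu, hcv] at hfin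
      omega
    | cons c₁ y₁' =>
      have hc₁y : c₁ ∈ y := by
        rw [hysplit]; exact List.mem_append_left _ List.mem_cons_self
      have hc₁a : c₁ ≠ a := fun h => hay (h ▸ hc₁y)
      have hc₁b : c₁ ≠ b := by
        intro h
        exact hbny₁ (h ▸ (List.mem_cons_self : c₁ ∈ c₁ :: y₁'))
      have hacR : [a, c₁] <+: R := by
        have h1 := Pal_prefix [a, c₁] y₁'
        rw [Pal_pair hc₁a] at h1
        have h2 : [a, c₁] ++ y₁' = a :: (c₁ :: y₁') := rfl
        rw [h2] at h1
        exact List.IsPrefix.trans ⟨[a], rfl⟩ h1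
      have hRP : R <:+ P := by
        have h1 : R <+: P := (List.prefix_append _ _).trans
          ((List.prefix_append _ _).trans hRbRP)
        have h2 := h1.reverse
        rw [hRrev, hPrev] at h2
        exact h2
      obtain ⟨pR, hpR⟩ := hRP
      have hacP : [a, c₁] <+: P := hacR.trans (by
        exact (List.prefix_append _ _).trans ((List.prefix_append _ _).trans hRbRP))
      obtain ⟨pc, hpc⟩ := hacP
      have hPP : Pal ((a :: y) ++ [a]) = P ++ P := Pal_aya a y hy hnd hay
      have hppref : IsPrefixOf (P ++ P) s := by
        have h0 := hepi (y.length + 2)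
        rw [hΔ] at h0
        have h1 : (List.range (y.length + 2)).map (wcat L w) = (a :: y) ++ [a] := by
          rw [map_range_wcat_le (by rw [hL]; omega)]
          rw [hLdef]
          have h2 : (a :: y) ++ [a, a] = ((a :: y) ++ [a]) ++ [a] := by simp
          rw [h2]
          have h3' : ((a :: y) ++ [a]).length = y.length + 2 := by simp
          rw [← h3', List.take_left]
        rw [h1, hPP] at h0
        exact h0
      set v := R ++ [a, c₁] with hv
      have hvfac : IsFactorOf v s := by
        apply factor_of_prefix hppref
        refine ⟨pR, pc, ?_⟩
        nth_rewrite 2 [← hpc]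
        nth_rewrite 1 [← hpR]
        simp [hv]
      have hcv : v.count b = 0 := by
        simp [hv, List.count_append, List.count_cons,
          List.count_eq_zero_of_not_mem hbR, Ne.symm hb, Ne.symm hc₁b, hc₁b]
      have hlenuv : u.length = v.length := by simp [hu, hv]
      have hfin := hbal u v hufac hvfac hlenuv b
      rw [hcu, hcv] at hfin
      omega
  · -- CASE I : b does not occur in y
    have hbv' : b ∉ v' := by
      rw [hv']
      intro h
      rcases List.mem_append.1 h with h | h
      · rcases List.mem_cons.1 h with h | h
        · exact hb h
        · exact hbmem h
      · exact hb (List.eq_of_mem_replicate h)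
    have hQb : Pal (v' ++ [b]) = Q ++ [b] ++ Q := Pal_fresh hbv'
    have hpref1 : IsPrefixOf (Q ++ [b] ++ Q) s := by rw [← hQb]; exact hNpref
    obtain ⟨tp, htp⟩ : ∃ t, P = a :: t := eq_cons_of_take_one (take_one_Pal a y)
    have hPP : Pal ((a :: y) ++ [a]) = P ++ P := Pal_aya a y hy hnd hay
    have hpL : IsPrefixOf (Pal L) s := by
      have h0 := hepi L.length
      rw [hΔ, map_range_wcat_le (le_refl _), List.take_length] at h0
      exact h0
    have hLsplit : L = ((a :: y) ++ [a]) ++ [a] := by rw [hLdef]; simp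
    have hPalL2 : Pal L = palClosure ((P ++ P) ++ [a]) := by
      rw [hLsplit, Pal_append_singleton, hPP]
    have hsuf : ((P ++ P) ++ [a]).reverse <:+ Pal L := by
      rw [hPalL2, ← palClosure_reverse ((P ++ P) ++ [a])]
      exact (palClosure_prefix _).reverse
    have hsufrev : ((P ++ P) ++ [a]).reverse = a :: (P ++ P) := by
      simp [List.reverse_append, hPrev]
    set u := [a] ++ P ++ [a] with hu
    have hufac : IsFactorOf u s := by
      apply factor_of_prefix hpL
      have h1 : u <+: a :: (P ++ P) := ⟨tp, by rw [hu, htp]; simp⟩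
      rw [hsufrev] at hsuf
      exact h1.isInfix.trans hsuf.isInfix
    have htq : P = tp.reverse ++ [a] := eq_concat_of_rev hPrev htp
    have hacQ : [a, c] <+: Q := (List.IsPrefix.trans ⟨[a], rfl⟩ hac).trans hPQ
    obtain ⟨qQ, hqQ⟩ := hPQ
    have hsufQ : [c, a] <:+ Q := by
      have h1 := hacQ.reverse
      rw [hQrev] at h1
      exact h1
    obtain ⟨q3, hq3⟩ := hsufQ
    set v := [c, a] ++ [b] ++ tp.reverse with hv
    have hvfac : IsFactorOf v s := by
      apply factor_of_prefix hpref1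
      refine ⟨q3, [a] ++ qQ, ?_⟩
      nth_rewrite 2 [← hqQ]
      rw [← hq3, hv, htq]
      simp [List.append_assoc]
    have hlenuv : u.length = v.length := by
      have h1 := congrArg List.length htq
      simp only [List.length_append, List.length_reverse, List.length_singleton] at h1
      simp [hu, hv]
      omega
    have hcu : u.count a = P.count a + 2 := by
      simp [hu, List.count_append]
    have hcv : v.count a = P.count a := by
      rw [htq]
      simp [hv, List.count_append, List.count_cons, hca, hb]
    have hfin := hbal u v hufac hvfac hlenuv a
    rw [hcu, hcv] at hfin
    omega
end
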